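/- arXiv:1509.02488 — 3 statements merged into one kernel-verified Lean document; each statement's English description precedes it below -/
import Mathlib

section
/- If 0 ≤ b < y < a ≤ 1 and the point P(y) satisfies dist(P(a), P(y)) = dist(P(y), P(b)), then dist(P(a), P(y)) ≤ dist(P(a), P(b)) / √2. -/
/-!
Points of the quarter circle are unit vectors, so `|X - Y|² = 2 - 2⟪X, Y⟫`. If `P y` is
equidistant from `P a ≠ P b`, it is orthogonal to `P a - P b`, hence, in the plane, parallel to
`P a + P b`: writing `c = ⟪P a, P y⟫`, we get `P a + P b = 2c • P y` and so
`⟪P a, P b⟫ = 2c² - 1` (the double-angle formula). The claim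
`2 (2 - 2c) ≤ 2 - 2 (2c² - 1)` is then `c² ≤ c`, which holds because `0 ≤ c ≤ 1`, the lower
bound since all three points lie in the first quadrant.
-/

/-- The point of the quarter of the unit circle in the closed first quadrant
with ordinate `y`. -/
noncomputable def P (y : ℝ) : EuclideanSpace ℝ (Fin 2) := WithLp.toLp 2 ![Real.sqrt (1 - y ^ 2), y]

open Module RealInnerProductSpace

section InnerProductSpace

variable {E : Type*} [NormedAddCommGroup E] [InnerProductSpace ℝ E]

lemma dist_sq_eq_two_sub_two_inner {u v : E} (hu : ‖u‖ = 1) (hv : ‖v‖ = 1) :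
    dist u v ^ 2 = 2 - 2 * ⟪u, v⟫ := by
  rw [dist_eq_norm, norm_sub_sq_real, hu, hv]
  ring

lemma eq_inner_smul_of_inner_eq_zero [Fact (finrank ℝ E = 2)] {x y z : E} (hz : z ≠ 0)
    (hxz : ⟪z, x⟫ = 0) (hyz : ⟪z, y⟫ = 0) (hy : ‖y‖ = 1) : x = ⟪x, y⟫ • y := by
  let K := (ℝ ∙ z)ᗮ
  have hK : finrank ℝ K = 1 := Submodule.finrank_orthogonal_span_singleton hz
  have hy0 : (⟨y, Submodule.mem_orthogonal_singleton_iff_inner_right.2 hyz⟩ : K) ≠ 0 := by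
    simp [← norm_ne_zero_iff, hy]
  obtain ⟨t, ht⟩ := (finrank_eq_one_iff_of_nonzero' _ hy0).1 hK
    ⟨x, Submodule.mem_orthogonal_singleton_iff_inner_right.2 hxz⟩
  have hx : x = t • y := congrArg Subtype.val ht.symm
  rw [hx, real_inner_smul_left, real_inner_self_eq_norm_sq, hy, one_pow, mul_one]

/-- Both `v` and `u + w` are orthogonal to `u - w`, which in the plane fixes their direction. -/
lemma add_eq_two_inner_smul_of_inner_eq [Fact (finrank ℝ E = 2)] {u v w : E}
    (hu : ‖u‖ = 1) (hv : ‖v‖ = 1) (hw : ‖w‖ = 1) (huw : u ≠ w) (h : ⟪u, v⟫ = ⟪w, v⟫) :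
    u + w = (2 * ⟪u, v⟫) • v := by
  have hsum : ⟪u - w, u + w⟫ = 0 := by
    rw [real_inner_comm]
    exact (real_inner_add_sub_eq_zero_iff u w).2 (hu.trans hw.symm)
  have hv' : ⟪u - w, v⟫ = 0 := by rw [inner_sub_left, h, sub_self]
  rw [eq_inner_smul_of_inner_eq_zero (sub_ne_zero.2 huw) hsum hv' hv, inner_add_left, h, two_mul]

lemma two_mul_dist_sq_le_of_add_eq_smul {u v w : E} (hu : ‖u‖ = 1) (hv : ‖v‖ = 1)
    (hw : ‖w‖ = 1) (hadd : u + w = (2 * ⟪u, v⟫) • v) (hc : 0 ≤ ⟪u, v⟫) :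
    2 * dist u v ^ 2 ≤ dist u w ^ 2 := by
  set c := ⟪u, v⟫
  have hd : ⟪u, w⟫ = 2 * c ^ 2 - 1 := by
    have := norm_add_sq_real u w
    rw [hadd, norm_smul, hv, hu, hw, Real.norm_eq_abs, abs_of_nonneg (by positivity)] at this
    linarith
  have hc1 : c ≤ 1 := by simpa [hu, hv] using real_inner_le_norm u v
  rw [dist_sq_eq_two_sub_two_inner hu hv, dist_sq_eq_two_sub_two_inner hu hw, hd]
  nlinarith

lemma dist_le_dist_div_sqrt_two_of_dist_eq [Fact (finrank ℝ E = 2)] {u v w : E}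
    (hu : ‖u‖ = 1) (hv : ‖v‖ = 1) (hw : ‖w‖ = 1) (huw : u ≠ w) (hequi : dist u v = dist v w)
    (hc : 0 ≤ ⟪u, v⟫) : dist u v ≤ dist u w / √2 := by
  have h : ⟪u, v⟫ = ⟪w, v⟫ := by
    have := congrArg (· ^ 2) hequi
    simp only [dist_sq_eq_two_sub_two_inner hu hv, dist_sq_eq_two_sub_two_inner hv hw] at this
    rw [real_inner_comm v w]; linarith
  have hsq := two_mul_dist_sq_le_of_add_eq_smul hu hv hw
    (add_eq_two_inner_smul_of_inner_eq hu hv hw huw h) hc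
  rw [le_div_iff₀ (by positivity), ← pow_le_pow_iff_left₀ (by positivity) dist_nonneg two_ne_zero,
    mul_pow, Real.sq_sqrt zero_le_two, mul_comm]
  exact hsq

end InnerProductSpace

lemma norm_P {t : ℝ} (ht : |t| ≤ 1) : ‖P t‖ = 1 := by
  have h : 0 ≤ 1 - t ^ 2 := sub_nonneg.2 (sq_le_one_iff_abs_le_one t |>.2 ht)
  rw [EuclideanSpace.norm_eq, Real.sqrt_eq_one]
  simp [P, Fin.sum_univ_two, Real.sq_sqrt h]

lemma inner_P_nonneg {s t : ℝ} (hs : 0 ≤ s) (ht : 0 ≤ t) : 0 ≤ ⟪P s, P t⟫ := by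
  simp only [P, EuclideanSpace.inner_eq_star_dotProduct, dotProduct, Pi.star_apply, star_trivial,
    Fin.sum_univ_two, Matrix.cons_val_zero, Matrix.cons_val_one]
  positivity

lemma P_injective : Function.Injective P := fun s t h => by
  simpa [P] using congrArg (· 1) h

/-- If `0 ≤ b < y < a ≤ 1` and `P y` is equidistant from `P a` and `P b`, then
`dist (P a) (P y) ≤ dist (P a) (P b) / √2`. -/
theorem equidistant_point_dist_le (a b y : ℝ) (hb : 0 ≤ b) (hby : b < y) (hya : y < a)
    (ha : a ≤ 1) (heq : dist (P a) (P y) = dist (P y) (P b)) :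
    dist (P a) (P y) ≤ dist (P a) (P b) / Real.sqrt 2 := by
  have : Fact (finrank ℝ (EuclideanSpace ℝ (Fin 2)) = 2) := ⟨finrank_euclideanSpace_fin⟩
  have hy : 0 ≤ y := hb.trans hby.le
  have unit {t : ℝ} (h0 : 0 ≤ t) (h1 : t ≤ 1) : ‖P t‖ = 1 := norm_P (abs_le.2 ⟨by linarith, h1⟩)
  exact dist_le_dist_div_sqrt_two_of_dist_eq (unit (by linarith) ha) (unit hy (by linarith))
    (unit hb (by linarith)) (P_injective.ne (by linarith)) heq (inner_P_nonneg (by linarith) hy)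
end

section
/- Let 0 ≤ b < a ≤ 1 and let a = t₀ > t₁ > ⋯ > t_n = b (n ≥ 1) be a strictly decreasing sequence in [b, a]. Set ℓ_i = dist(P(t_{i−1}), P(t_i)) for 1 ≤ i ≤ n, ℓ⁰ = dist(P(a), P(b)), h_i = √(1 − (ℓ_i/2)²), and h⁰ = √(1 − (ℓ⁰/2)²). Then ℓ⁰ ≤ Σ_{i=1}^n ℓ_i ≤ (Σ_{i=1}^n h_i ℓ_i) / (min_{1≤i≤n} h_i) ≤ ℓ⁰ / (h⁰ · min_{1≤i≤n} h_i). -/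
/-- `t 0 = a > t 1 > ⋯ > t n = b` is a strictly decreasing finite sequence (a partition
of the arc of the quarter circle from `P a` to `P b`). -/
def IsPartition (a b : ℝ) (n : ℕ) (t : ℕ → ℝ) : Prop :=
  0 < n ∧ t 0 = a ∧ t n = b ∧ ∀ i < n, t (i + 1) < t i

/-!
Write `P y = (cos θ, sin θ)` with `θ = arcsin y`. A chord of the unit circle subtending the angle
`Δ` has length `ℓ = 2 sin (Δ / 2)` and altitude `h = cos (Δ / 2)`, so `h ℓ = sin Δ ≤ Δ` and
`ℓ / h = 2 tan (Δ / 2) ≥ Δ`. Summing the first bound over the partition telescopes to the angle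
`Δ⁰` of the whole arc, which the second bound controls by `ℓ⁰ / h⁰`. The other two inequalities
are the triangle inequality and `hᵢ ≥ min h`.
-/

open Real Finset

lemma dist_toLp_cos_sin (θ θ' : ℝ) :
    dist (WithLp.toLp 2 ![cos θ, sin θ] : EuclideanSpace ℝ (Fin 2))
      (WithLp.toLp 2 ![cos θ', sin θ']) = 2 * |sin ((θ - θ') / 2)| := by
  have hsq : (cos θ - cos θ') ^ 2 + (sin θ - sin θ') ^ 2 = (2 * sin ((θ - θ') / 2)) ^ 2 := by
    have hcos : cos (θ - θ') = 1 - 2 * sin ((θ - θ') / 2) ^ 2 := by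
      have h := cos_two_mul' ((θ - θ') / 2)
      rw [show 2 * ((θ - θ') / 2) = θ - θ' by ring] at h
      linarith [sin_sq_add_cos_sq ((θ - θ') / 2)]
    nlinarith [cos_sub θ θ', sin_sq_add_cos_sq θ, sin_sq_add_cos_sq θ']
  rw [EuclideanSpace.dist_eq, Fin.sum_univ_two]
  simp only [Matrix.cons_val_zero, Matrix.cons_val_one, Real.dist_eq, sq_abs]
  rw [hsq, sqrt_sq_eq_abs, abs_mul, abs_two]

lemma P_eq_toLp_cos_sin_arcsin {y : ℝ} (hy₁ : -1 ≤ y) (hy₂ : y ≤ 1) :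
    P y = WithLp.toLp 2 ![cos (arcsin y), sin (arcsin y)] := by
  rw [cos_arcsin, sin_arcsin hy₁ hy₂, P]

section chord

variable {y y' : ℝ}

lemma dist_P_of_le (hy' : -1 ≤ y') (hle : y' ≤ y) (hy : y ≤ 1) :
    dist (P y) (P y') = 2 * sin ((arcsin y - arcsin y') / 2) := by
  rw [P_eq_toLp_cos_sin_arcsin (by linarith) hy, P_eq_toLp_cos_sin_arcsin hy' (by linarith),
    dist_toLp_cos_sin, abs_of_nonneg]
  apply sin_nonneg_of_nonneg_of_le_pi
  · linarith [monotone_arcsin hle]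
  · linarith [pi_pos, arcsin_le_pi_div_two y, neg_pi_div_two_le_arcsin y']

lemma sqrt_one_sub_sq_half_dist_P (hy' : -1 ≤ y') (hle : y' ≤ y) (hy : y ≤ 1) :
    √(1 - (dist (P y) (P y') / 2) ^ 2) = cos ((arcsin y - arcsin y') / 2) := by
  have hcos : 0 ≤ cos ((arcsin y - arcsin y') / 2) := by
    apply cos_nonneg_of_mem_Icc
    constructor
    · linarith [pi_pos, monotone_arcsin hle]
    · linarith [arcsin_le_pi_div_two y, neg_pi_div_two_le_arcsin y']
  rw [dist_P_of_le hy' hle hy, mul_div_cancel_left₀ _ two_ne_zero, ← cos_sq', sqrt_sq hcos]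

lemma sqrt_one_sub_sq_half_dist_P_mul_dist_P_le (hy' : -1 ≤ y') (hle : y' ≤ y) (hy : y ≤ 1) :
    √(1 - (dist (P y) (P y') / 2) ^ 2) * dist (P y) (P y') ≤ arcsin y - arcsin y' := by
  rw [sqrt_one_sub_sq_half_dist_P hy' hle hy, dist_P_of_le hy' hle hy,
    mul_comm (cos _), ← sin_two_mul, mul_div_cancel₀ _ two_ne_zero]
  exact sin_le (by linarith [monotone_arcsin hle])

variable (hy' : -1 < y') (hle : y' ≤ y) (hy : y ≤ 1)
include hy' hle hy

lemma sqrt_one_sub_sq_half_dist_P_pos : 0 < √(1 - (dist (P y) (P y') / 2) ^ 2) := by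
  rw [sqrt_one_sub_sq_half_dist_P hy'.le hle hy]
  apply cos_pos_of_mem_Ioo
  constructor
  · linarith [pi_pos, monotone_arcsin hle]
  · linarith [arcsin_le_pi_div_two y, neg_pi_div_two_lt_arcsin.2 hy']

lemma arcsin_sub_le_dist_P_div_sqrt :
    arcsin y - arcsin y' ≤ dist (P y) (P y') / √(1 - (dist (P y) (P y') / 2) ^ 2) := by
  rw [sqrt_one_sub_sq_half_dist_P hy'.le hle hy, dist_P_of_le hy'.le hle hy, mul_div_assoc,
    ← tan_eq_sin_div_cos]
  have := le_tan (x := (arcsin y - arcsin y') / 2) (by linarith [monotone_arcsin hle])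
    (by linarith [arcsin_le_pi_div_two y, neg_pi_div_two_lt_arcsin.2 hy'])
  linarith

end chord

lemma IsPartition.mem_Icc {a b : ℝ} {n : ℕ} {t : ℕ → ℝ} (hp : IsPartition a b n t) {i : ℕ}
    (hi : i ≤ n) : t i ∈ Set.Icc b a := by
  obtain ⟨-, rfl, rfl, hdec⟩ := hp
  have hanti := (strictAntiOn_Iic_of_succ_lt hdec).antitoneOn
  exact ⟨hanti hi (le_refl n) hi, hanti (Nat.zero_le n) hi (Nat.zero_le i)⟩

lemma Finset.sum_le_sum_mul_div_inf' {ι 𝕜 : Type*} [Field 𝕜] [LinearOrder 𝕜]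
    [IsStrictOrderedRing 𝕜] {s : Finset ι} (hs : s.Nonempty) {f g : ι → 𝕜} (hf : ∀ i ∈ s, 0 ≤ f i)
    (hg : 0 < s.inf' hs g) : ∑ i ∈ s, f i ≤ (∑ i ∈ s, g i * f i) / s.inf' hs g := by
  rw [le_div_iff₀ hg, sum_mul]
  exact sum_le_sum fun i hi ↦ by
    rw [mul_comm (g i)]; exact mul_le_mul_of_nonneg_left (inf'_le g hi) (hf i hi)

theorem polygonal_chain_inequalities_general (a b : ℝ) (hb : 0 ≤ b) (ha : a ≤ 1)
    (n : ℕ) (t : ℕ → ℝ) (hpart : IsPartition a b n t)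
    (ℓ : ℕ → ℝ) (hℓ : ∀ i, ℓ i = dist (P (t i)) (P (t (i + 1))))
    (ℓ0 : ℝ) (hℓ0 : ℓ0 = dist (P a) (P b))
    (h : ℕ → ℝ) (hh : ∀ i, h i = Real.sqrt (1 - (ℓ i / 2) ^ 2))
    (h0 : ℝ) (hh0 : h0 = Real.sqrt (1 - (ℓ0 / 2) ^ 2))
    (hne : (Finset.range n).Nonempty) :
    ℓ0 ≤ ∑ i ∈ Finset.range n, ℓ i ∧
    (∑ i ∈ Finset.range n, ℓ i) ≤ (∑ i ∈ Finset.range n, h i * ℓ i) / ((Finset.range n).inf' hne h) ∧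
    (∑ i ∈ Finset.range n, h i * ℓ i) / ((Finset.range n).inf' hne h)
      ≤ ℓ0 / (h0 * (Finset.range n).inf' hne h) := by
  have hstep : ∀ i ∈ range n, -1 < t (i + 1) ∧ t (i + 1) ≤ t i ∧ t i ≤ 1 := fun i hi ↦ by
    have hi := mem_range.1 hi
    exact ⟨by linarith [(hpart.mem_Icc hi).1], (hpart.2.2.2 i hi).le,
      (hpart.mem_Icc hi.le).2.trans ha⟩
  have hinf : 0 < (range n).inf' hne h := (lt_inf'_iff hne).2 fun i hi ↦ by
    obtain ⟨h₁, h₂, h₃⟩ := hstep i hi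
    rw [hh, hℓ]; exact sqrt_one_sub_sq_half_dist_P_pos h₁ h₂ h₃
  have hba : b ≤ a := Set.nonempty_Icc.1 ⟨_, hpart.mem_Icc (Nat.zero_le n)⟩
  obtain ⟨-, ht0, htn, -⟩ := hpart
  refine ⟨?_, sum_le_sum_mul_div_inf' hne (fun i _ ↦ hℓ i ▸ dist_nonneg) hinf, ?_⟩
  · simpa only [hℓ0, ← ht0, ← htn, hℓ] using dist_le_range_sum_dist (fun i ↦ P (t i)) n
  rw [← div_div]
  gcongr
  calc ∑ i ∈ range n, h i * ℓ i ≤ ∑ i ∈ range n, (arcsin (t i) - arcsin (t (i + 1))) :=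
        sum_le_sum fun i hi ↦ by
          obtain ⟨h₁, h₂, h₃⟩ := hstep i hi
          rw [hh, hℓ]; exact sqrt_one_sub_sq_half_dist_P_mul_dist_P_le h₁.le h₂ h₃
    _ = arcsin a - arcsin b := by rw [sum_range_sub', ht0, htn]
    _ ≤ ℓ0 / h0 := by
        rw [hh0, hℓ0]
        exact arcsin_sub_le_dist_P_div_sqrt (by linarith) hba ha

/-- The chain of inequalities of Proposition 1:
`ℓ⁰ ≤ Σ ℓᵢ ≤ (Σ hᵢ ℓᵢ) / min hᵢ ≤ ℓ⁰ / (h⁰ · min hᵢ)`. -/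
theorem polygonal_chain_inequalities (a b : ℝ) (hb : 0 ≤ b) (hba : b < a) (ha : a ≤ 1)
    (n : ℕ) (t : ℕ → ℝ) (hpart : IsPartition a b n t)
    (ℓ : ℕ → ℝ) (hℓ : ∀ i, ℓ i = dist (P (t i)) (P (t (i + 1))))
    (ℓ0 : ℝ) (hℓ0 : ℓ0 = dist (P a) (P b))
    (h : ℕ → ℝ) (hh : ∀ i, h i = Real.sqrt (1 - (ℓ i / 2) ^ 2))
    (h0 : ℝ) (hh0 : h0 = Real.sqrt (1 - (ℓ0 / 2) ^ 2))
    (hne : (Finset.range n).Nonempty) :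
    ℓ0 ≤ ∑ i ∈ Finset.range n, ℓ i ∧
    (∑ i ∈ Finset.range n, ℓ i) ≤ (∑ i ∈ Finset.range n, h i * ℓ i) / ((Finset.range n).inf' hne h) ∧
    (∑ i ∈ Finset.range n, h i * ℓ i) / ((Finset.range n).inf' hne h)
      ≤ ℓ0 / (h0 * (Finset.range n).inf' hne h) :=
  polygonal_chain_inequalities_general a b hb ha n t hpart ℓ hℓ ℓ0 hℓ0 h hh h0 hh0 hne
end

section
/- Let 0 ≤ b < a ≤ 1, let 𝒫 be a partition of the arc of 𝒞 from P(a) to P(b) with norm ‖𝒫‖, and let 𝒫′ be a refinement of 𝒫. Set ℓ⁰ = dist(P(a), P(b)) and h⁰ = √(1 − (ℓ⁰/2)²). Then |L(𝒫′) − L(𝒫)| ≤ (ℓ⁰ / (h⁰)²) · (‖𝒫‖² / (4 − ‖𝒫‖²)). -/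
/-- The polygonal length of the partition `t 0 > t 1 > ⋯ > t n`. -/
noncomputable def polyLength (n : ℕ) (t : ℕ → ℝ) : ℝ :=
  ∑ i ∈ Finset.range n, dist (P (t i)) (P (t (i + 1)))

/-- The norm of a partition: the maximum length of one of its segments. -/
noncomputable def partNorm (n : ℕ) (t : ℕ → ℝ) : ℝ :=
  sSup {d | ∃ i < n, d = dist (P (t i)) (P (t (i + 1)))}

/-!
Measure the arc by the angle `θ = arcsin y`. A chord subtending the angle `2w` has length
`ℓ = 2 sin w`, so `1 - (ℓ / 2) ^ 2 = cos² w`, and `w cos² w ≤ w cos w ≤ sin w` (from `w ≤ tan w`)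
turns into `2w ≤ ℓ / (1 - (ℓ / 2) ^ 2)`. For the whole arc this bounds its angle `D` by
`ℓ⁰ / (h⁰)²`; for a segment of `𝒫` it bounds the excess of arc over chord by
`ℓ · ‖𝒫‖² / (4 - ‖𝒫‖²)`. Refining only lengthens a polygon, and every inscribed polygon is
shorter than the arc, so
`0 ≤ L(𝒫') - L(𝒫) ≤ D - L(𝒫) ≤ L(𝒫) ‖𝒫‖² / (4 - ‖𝒫‖²) ≤ D ‖𝒫‖² / (4 - ‖𝒫‖²)`.
-/

open Real Finset

lemma dist_P_eq {u v : ℝ} (hv : -1 ≤ v) (hvu : v ≤ u) (hu : u ≤ 1) :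
    dist (P u) (P v) = 2 * sin ((arcsin u - arcsin v) / 2) := by
  set w := (arcsin u - arcsin v) / 2 with hw
  have hw0 : 0 ≤ w := by have := monotone_arcsin hvu; linarith
  have hwπ : w ≤ π := by linarith [arcsin_le_pi_div_two u, neg_pi_div_two_le_arcsin v]
  have hsq : dist (P u) (P v) ^ 2 = (2 * sin w) ^ 2 := by
    rw [EuclideanSpace.dist_eq, sq_sqrt (by positivity), Fin.sum_univ_two]
    simp only [P, WithLp.ofLp_toLp, Matrix.cons_val_zero, Matrix.cons_val_one, Real.dist_eq, sq_abs]
    rw [← cos_arcsin u, ← cos_arcsin v]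
    rw [show u - v = sin (arcsin u) - sin (arcsin v) by
      rw [sin_arcsin (by linarith) hu, sin_arcsin hv (by linarith)]]
    have hcos : cos (2 * w) = 1 - 2 * sin w ^ 2 := by rw [cos_two_mul, cos_sq']; ring
    rw [show 2 * w = arcsin u - arcsin v by ring, cos_sub] at hcos
    nlinarith [sin_sq_add_cos_sq (arcsin u), sin_sq_add_cos_sq (arcsin v)]
  exact (pow_left_inj₀ dist_nonneg (by have := sin_nonneg_of_nonneg_of_le_pi hw0 hwπ; positivity)
    two_ne_zero).1 hsq

lemma mul_cos_le_sin {x : ℝ} (hx₀ : 0 ≤ x) (hx : x < π / 2) : x * cos x ≤ sin x := by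
  have hcos : 0 < cos x := cos_pos_of_mem_Ioo ⟨by linarith [pi_pos], hx⟩
  simpa [tan_eq_sin_div_cos, le_div_iff₀ hcos] using le_tan hx₀ hx

lemma dist_P_le_arcsin_sub {u v : ℝ} (hv : -1 ≤ v) (hvu : v ≤ u) (hu : u ≤ 1) :
    dist (P u) (P v) ≤ arcsin u - arcsin v := by
  rw [dist_P_eq hv hvu hu]
  linarith [sin_le (x := (arcsin u - arcsin v) / 2) (by linarith [monotone_arcsin hvu])]

lemma dist_P_lt_two {u v : ℝ} (hv : 0 ≤ v) (hvu : v ≤ u) (hu : u ≤ 1) :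
    dist (P u) (P v) < 2 := by
  linarith [dist_P_le_arcsin_sub (by linarith) hvu hu, arcsin_le_pi_div_two u,
    arcsin_nonneg.2 hv, pi_lt_d2]

lemma arcsin_sub_le_dist_P_div {u v : ℝ} (hv : 0 ≤ v) (hvu : v ≤ u) (hu : u ≤ 1) :
    arcsin u - arcsin v ≤ dist (P u) (P v) / (1 - (dist (P u) (P v) / 2) ^ 2) := by
  rw [dist_P_eq (by linarith) hvu hu]
  set w := (arcsin u - arcsin v) / 2 with hw
  have hw0 : 0 ≤ w := by linarith [monotone_arcsin hvu]
  have hwπ : w < π / 2 := by linarith [arcsin_le_pi_div_two u, arcsin_nonneg.2 hv, pi_pos]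
  have hcos : 0 < cos w := cos_pos_of_mem_Ioo ⟨by linarith, hwπ⟩
  rw [show 1 - (2 * sin w / 2) ^ 2 = cos w ^ 2 by rw [cos_sq']; ring, le_div_iff₀ (by positivity)]
  nlinarith [mul_cos_le_sin hw0 hwπ,
    mul_nonneg (mul_nonneg hw0 hcos.le) (sub_nonneg.2 (cos_le_one w))]

lemma div_one_sub_sq_half_sub_le {ℓ N : ℝ} (hℓ : 0 ≤ ℓ) (hℓN : ℓ ≤ N) (hN : N < 2) :
    ℓ / (1 - (ℓ / 2) ^ 2) - ℓ ≤ ℓ * (N ^ 2 / (4 - N ^ 2)) := by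
  have hℓ2 : 0 < 4 - ℓ ^ 2 := by nlinarith
  have hN2 : 0 < 4 - N ^ 2 := by nlinarith
  calc ℓ / (1 - (ℓ / 2) ^ 2) - ℓ = ℓ * (ℓ ^ 2 / (4 - ℓ ^ 2)) := by
        rw [show 1 - (ℓ / 2) ^ 2 = (4 - ℓ ^ 2) / 4 by ring]
        field_simp
        ring
    _ ≤ ℓ * (N ^ 2 / (4 - N ^ 2)) := by gcongr

lemma sum_range_dist_comp_le {X : Type*} [PseudoMetricSpace X] (f : ℕ → X) {j : ℕ → ℕ}
    {n : ℕ} (hj : MonotoneOn j (Set.Iic n)) :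
    ∑ i ∈ range n, dist (f (j i)) (f (j (i + 1)))
      ≤ ∑ k ∈ Ico (j 0) (j n), dist (f k) (f (k + 1)) := by
  induction n with
  | zero => simp
  | succ n ih =>
    have hj0 : j 0 ≤ j n := hj (Nat.zero_le _) (Nat.le_succ n) (Nat.zero_le n)
    have hjn : j n ≤ j (n + 1) := hj (Nat.le_succ n) (Set.mem_Iic.2 le_rfl) (Nat.le_succ n)
    rw [sum_range_succ, ← sum_Ico_consecutive _ hj0 hjn]
    exact add_le_add (ih (hj.mono (Set.Iic_subset_Iic.2 (Nat.le_succ n))))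
      (dist_le_Ico_sum_dist f hjn)

lemma finite_setOf_dist (n : ℕ) (t : ℕ → ℝ) :
    Set.Finite {d | ∃ i < n, d = dist (P (t i)) (P (t (i + 1)))} :=
  ((Set.finite_Iio n).image fun i => dist (P (t i)) (P (t (i + 1)))).subset
    (by rintro _ ⟨i, hi, rfl⟩; exact ⟨i, hi, rfl⟩)

lemma dist_le_partNorm (t : ℕ → ℝ) {n i : ℕ} (hi : i < n) :
    dist (P (t i)) (P (t (i + 1))) ≤ partNorm n t :=
  le_csSup (finite_setOf_dist n t).bddAbove ⟨i, hi, rfl⟩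

lemma exists_partNorm_eq (t : ℕ → ℝ) {n : ℕ} (hn : 0 < n) :
    ∃ i < n, partNorm n t = dist (P (t i)) (P (t (i + 1))) :=
  Set.Nonempty.csSup_mem (s := {d | ∃ i < n, d = dist (P (t i)) (P (t (i + 1)))})
    ⟨_, 0, hn, rfl⟩ (finite_setOf_dist n t)

namespace IsPartition

variable {a b : ℝ} {n : ℕ} {t : ℕ → ℝ}

lemma strictAntiOn (h : IsPartition a b n t) : StrictAntiOn t (Set.Iic n) :=
  strictAntiOn_Iic_of_succ_lt fun m hm => by simpa using h.2.2.2 m hm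

lemma mem_Icc_s7 (h : IsPartition a b n t) {i : ℕ} (hi : i ≤ n) : t i ∈ Set.Icc b a := by
  have ht := h.strictAntiOn
  obtain ⟨-, h0, hn, -⟩ := h
  constructor
  · exact hn ▸ ht.antitoneOn (Set.mem_Iic.2 hi) (Set.mem_Iic.2 le_rfl) hi
  · exact h0 ▸ ht.antitoneOn (Set.mem_Iic.2 (Nat.zero_le _)) (Set.mem_Iic.2 hi)
      (Nat.zero_le i)

lemma dist_le_arcsin_sub (h : IsPartition a b n t) (hb : -1 ≤ b) (ha : a ≤ 1) {i : ℕ}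
    (hi : i < n) :
    dist (P (t i)) (P (t (i + 1))) ≤ arcsin (t i) - arcsin (t (i + 1)) :=
  dist_P_le_arcsin_sub (hb.trans (h.mem_Icc_s7 hi).1) (h.2.2.2 i hi).le ((h.mem_Icc_s7 hi.le).2.trans ha)

lemma polyLength_le_arcsin_sub (h : IsPartition a b n t) (hb : -1 ≤ b) (ha : a ≤ 1) :
    polyLength n t ≤ arcsin a - arcsin b :=
  calc polyLength n t ≤ ∑ i ∈ range n, (arcsin (t i) - arcsin (t (i + 1))) :=
        sum_le_sum fun i hi => h.dist_le_arcsin_sub hb ha (mem_range.1 hi)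
    _ = arcsin a - arcsin b := by rw [sum_range_sub', h.2.1, h.2.2.1]

lemma partNorm_lt_two (h : IsPartition a b n t) (hb : 0 ≤ b) (ha : a ≤ 1) :
    partNorm n t < 2 := by
  obtain ⟨i, hi, hN⟩ := exists_partNorm_eq t h.1
  rw [hN]
  exact dist_P_lt_two (hb.trans (h.mem_Icc_s7 hi).1) (h.2.2.2 i hi).le ((h.mem_Icc_s7 hi.le).2.trans ha)

lemma arcsin_sub_sub_polyLength_le (h : IsPartition a b n t) (hb : 0 ≤ b) (ha : a ≤ 1) :
    arcsin a - arcsin b - polyLength n t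
      ≤ polyLength n t * (partNorm n t ^ 2 / (4 - partNorm n t ^ 2)) := by
  set c := partNorm n t ^ 2 / (4 - partNorm n t ^ 2)
  calc arcsin a - arcsin b - polyLength n t
        = ∑ i ∈ range n,
            (arcsin (t i) - arcsin (t (i + 1)) - dist (P (t i)) (P (t (i + 1)))) := by
        rw [sum_sub_distrib, sum_range_sub', h.2.1, h.2.2.1, polyLength]
    _ ≤ ∑ i ∈ range n, dist (P (t i)) (P (t (i + 1))) * c := by
        refine sum_le_sum fun i hi => ?_
        have hi := mem_range.1 hi
        have hv := hb.trans (h.mem_Icc_s7 hi).1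
        have hu := (h.mem_Icc_s7 hi.le).2.trans ha
        have hvu := (h.2.2.2 i hi).le
        linarith [arcsin_sub_le_dist_P_div hv hvu hu, div_one_sub_sq_half_sub_le dist_nonneg
          (dist_le_partNorm t hi) (h.partNorm_lt_two hb ha)]
    _ = polyLength n t * c := by rw [polyLength, sum_mul]

end IsPartition

lemma polyLength_le_of_refines {a b : ℝ} {n m : ℕ} {t s : ℕ → ℝ}
    (hP : IsPartition a b n t) (hP' : IsPartition a b m s) (href : ∀ i ≤ n, ∃ j ≤ m, s j = t i) :
    polyLength n t ≤ polyLength m s := by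
  choose! j hjm hjs using href
  have hs := hP'.strictAntiOn
  have hj_mono : MonotoneOn j (Set.Iic n) := fun i hi i' hi' hii' => by
    rw [← hs.le_iff_ge (hjm i' hi') (hjm i hi), hjs i hi, hjs i' hi']
    exact hP.strictAntiOn.antitoneOn hi hi' hii'
  have hj0 : j 0 = 0 := hs.injOn (hjm 0 (Nat.zero_le n)) (Nat.zero_le m)
    (by rw [hjs 0 (Nat.zero_le n), hP.2.1, hP'.2.1])
  have hjn : j n = m := hs.injOn (hjm n le_rfl) (Set.mem_Iic.2 le_rfl)
    (by rw [hjs n le_rfl, hP.2.2.1, hP'.2.2.1])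
  have key := sum_range_dist_comp_le (fun k => P (s k)) hj_mono
  rw [hj0, hjn, ← range_eq_Ico] at key
  calc polyLength n t = ∑ i ∈ range n, dist (P (s (j i))) (P (s (j (i + 1)))) :=
        sum_congr rfl fun i hi => by
          rw [hjs i (mem_range.1 hi).le, hjs (i + 1) (mem_range.1 hi)]
    _ ≤ polyLength m s := key

/-- Proposition 5: if `𝒫' = (m, s)` is a refinement of the partition `𝒫 = (n, t)` of the
arc from `P a` to `P b`, then
`|L(𝒫') − L(𝒫)| ≤ (ℓ⁰ / (h⁰)²) · (‖𝒫‖² / (4 − ‖𝒫‖²))`. -/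
theorem abs_polyLength_sub_le (a b : ℝ) (hb : 0 ≤ b) (hba : b < a) (ha : a ≤ 1)
    (n : ℕ) (t : ℕ → ℝ) (hP : IsPartition a b n t)
    (m : ℕ) (s : ℕ → ℝ) (hP' : IsPartition a b m s)
    (href : ∀ i ≤ n, ∃ j ≤ m, s j = t i)
    (ℓ0 : ℝ) (hℓ0 : ℓ0 = dist (P a) (P b))
    (h0 : ℝ) (hh0 : h0 = Real.sqrt (1 - (ℓ0 / 2) ^ 2)) :
    |polyLength m s - polyLength n t|
      ≤ (ℓ0 / h0 ^ 2) * (partNorm n t ^ 2 / (4 - partNorm n t ^ 2)) := by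
  set N := partNorm n t
  have hc : 0 ≤ N ^ 2 / (4 - N ^ 2) := by
    have := dist_nonneg.trans (dist_le_partNorm t hP.1)
    have := hP.partNorm_lt_two hb ha
    exact div_nonneg (sq_nonneg N) (by nlinarith)
  have hh0sq : h0 ^ 2 = 1 - (ℓ0 / 2) ^ 2 := by
    have := dist_P_lt_two hb hba.le ha
    rw [hh0, sq_sqrt]
    nlinarith [dist_nonneg (x := P a) (y := P b)]
  have harc : arcsin a - arcsin b ≤ ℓ0 / h0 ^ 2 := by
    rw [hh0sq, hℓ0]
    exact arcsin_sub_le_dist_P_div hb hba.le ha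
  have hrefine := polyLength_le_of_refines hP hP' href
  rw [abs_of_nonneg (sub_nonneg.2 hrefine)]
  calc polyLength m s - polyLength n t ≤ arcsin a - arcsin b - polyLength n t := by
        linarith [hP'.polyLength_le_arcsin_sub (by linarith) ha]
    _ ≤ polyLength n t * (N ^ 2 / (4 - N ^ 2)) := hP.arcsin_sub_sub_polyLength_le hb ha
    _ ≤ (arcsin a - arcsin b) * (N ^ 2 / (4 - N ^ 2)) :=
        mul_le_mul_of_nonneg_right (hP.polyLength_le_arcsin_sub (by linarith) ha) hc
    _ ≤ ℓ0 / h0 ^ 2 * (N ^ 2 / (4 - N ^ 2)) := mul_le_mul_of_nonneg_right harc hc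
end
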